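/- arXiv:2101.06042 — 3 statements merged into one kernel-verified Lean document; each statement's English description precedes it below -/
import Mathlib

section
/- Let t ≥ 2, let (X, A) be an A-metric space, and let W be a convex structure on X making (X, A, W) a complete convex A-metric space. Let f : X → X be an A-Zamfirescu mapping. For each n ∈ ℕ and i ∈ {1,...,t}, let α_i^n ∈ [0,1] with α_1^n + α_2^n + ... + α_t^n = 1, and assume Σ_{n=0}^∞ α_t^n = ∞. Then for any x_0 ∈ X, the Mann iteration sequence defined by x_{n+1} = W(x_n, x_n, ..., x_n, f x_n; α_1^n, α_2^n, ..., α_t^n) converges to the unique fixed point of f, i.e., there is a unique u ∈ X with f u = u and A(x_n, x_n, ..., x_n, u) → 0 as n → ∞. -/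
open Filter

/-- The tuple `(x, x, ..., x, y)` with `x` in the first `t-1` slots and `y` in the last. -/
def avec {X : Type*} (t : ℕ) (x y : X) : Fin t → X :=
  fun j => if (j : ℕ) < t - 1 then x else y

/-- `A` is an A-metric on `X` (with `t` arguments). -/
def IsAMetric {X : Type*} (t : ℕ) (A : (Fin t → X) → ℝ) : Prop :=
  (∀ x : Fin t → X, 0 ≤ A x) ∧
  (∀ x : Fin t → X, A x = 0 ↔ ∀ i j, x i = x j) ∧
  (∀ (x : Fin t → X) (y : X), A x ≤ ∑ i, A (avec t (x i) y))

/-- `f` is an A-Zamfirescu mapping with respect to the A-metric `A`. -/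
def IsAZ {X : Type*} (t : ℕ) (A : (Fin t → X) → ℝ) (f : X → X) : Prop :=
  ∃ a b c : ℝ, 0 ≤ a ∧ a < 1 ∧ 0 ≤ b ∧ b < 1 / (t : ℝ) ∧ 0 ≤ c ∧ c < 1 / (t : ℝ) ∧
    ∀ x y : X,
      A (avec t (f x) (f y)) ≤ a * A (avec t x y) ∨
      A (avec t (f x) (f y)) ≤ b * (A (avec t (f x) x) + A (avec t (f y) y)) ∨
      A (avec t (f x) (f y)) ≤ c * (A (avec t (f x) y) + A (avec t (f y) x))

/-- `W` is a convex structure on the A-metric space `(X, A)`. -/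
def IsConvexStructure {X : Type*} (t : ℕ) (A : (Fin t → X) → ℝ)
    (W : (Fin t → X) → (Fin t → ℝ) → X) : Prop :=
  ∀ (u : Fin t → X) (xs : Fin t → X) (a : Fin t → ℝ),
    (∀ i, a i ∈ Set.Icc (0 : ℝ) 1) → (∑ i, a i = 1) →
    A (fun j => if (j : ℕ) < t - 1 then u j else W xs a) ≤
      ∑ i, a i * A (fun j => if (j : ℕ) < t - 1 then u j else xs i)

/-- The A-metric space `(X, A)` is complete: every Cauchy sequence converges. -/
def IsCompleteA {X : Type*} (t : ℕ) (A : (Fin t → X) → ℝ) : Prop :=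
  ∀ x : ℕ → X,
    (∀ ε : ℝ, 0 < ε → ∃ N, ∀ n ≥ N, ∀ m ≥ N, A (avec t (x n) (x m)) < ε) →
    ∃ u : X, Tendsto (fun n => A (avec t (x n) u)) atTop (nhds 0)

namespace MannAux
variable {X : Type*}

theorem avec_castSucc (m : ℕ) (x y : X) (i : Fin m) :
    avec (m + 1) x y i.castSucc = x := by
  simp [avec, i.isLt]

theorem avec_last (m : ℕ) (x y : X) : avec (m + 1) x y (Fin.last m) = y := by
  simp [avec]

theorem A_avec_self {t : ℕ} {A : (Fin t → X) → ℝ} (hA : IsAMetric t A) (x : X) :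
    A (avec t x x) = 0 := by
  rw [hA.2.1]
  intro i j
  simp [avec]

theorem d_symm {t : ℕ} (ht : 2 ≤ t) {A : (Fin t → X) → ℝ} (hA : IsAMetric t A)
    (x y : X) : A (avec t x y) = A (avec t y x) := by
  obtain ⟨m, rfl⟩ : ∃ m, t = m + 1 := ⟨t - 1, by omega⟩
  have key : ∀ a b : X, A (avec (m + 1) a b) ≤ A (avec (m + 1) b a) := by
    intro a b
    have h3 := hA.2.2 (avec (m + 1) a b) a
    rw [Fin.sum_univ_castSucc] at h3
    simpa [avec_castSucc, avec_last, A_avec_self hA] using h3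
  exact le_antisymm (key x y) (key y x)

theorem d_tri {t : ℕ} (ht : 2 ≤ t) {A : (Fin t → X) → ℝ} (hA : IsAMetric t A)
    (x y z : X) :
    A (avec t x z) ≤ ((t : ℝ) - 1) * A (avec t x y) + A (avec t y z) := by
  have hs := d_symm ht hA z y
  obtain ⟨m, rfl⟩ : ∃ m, t = m + 1 := ⟨t - 1, by omega⟩
  have h3 := hA.2.2 (avec (m + 1) x z) y
  rw [Fin.sum_univ_castSucc] at h3
  simp only [avec_castSucc, avec_last, Finset.sum_const, Finset.card_univ,
    Fintype.card_fin, nsmul_eq_mul] at h3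
  rw [hs] at h3
  push_cast
  linarith

theorem d_eq_zero_iff {t : ℕ} (ht : 2 ≤ t) {A : (Fin t → X) → ℝ} (hA : IsAMetric t A)
    (x y : X) : A (avec t x y) = 0 ↔ x = y := by
  constructor
  · intro h
    have h2 := (hA.2.1 _).1 h ⟨0, by omega⟩ ⟨t - 1, by omega⟩
    have h0 : (0:ℕ) < t - 1 := by omega
    simpa [avec, h0] using h2
  · rintro rfl; exact A_avec_self hA x

theorem AZ_key {t : ℕ} (ht : 2 ≤ t) {A : (Fin t → X) → ℝ} (hA : IsAMetric t A)
    {f : X → X} (hf : IsAZ t A f) :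
    ∃ δ L : ℝ, 0 ≤ δ ∧ δ < 1 ∧ 0 ≤ L ∧
      (∀ x y, A (avec t (f x) (f y)) ≤
        δ * A (avec t x y) + L * A (avec t x (f x))) ∧
      (∀ p, A (avec t (f p) (f (f p))) ≤ δ * A (avec t p (f p))) := by
  obtain ⟨a, b, c, ha0, ha1, hb0, hb, hc0, hc, hZ⟩ := hf
  have hT2 : (2 : ℝ) ≤ (t : ℝ) := by exact_mod_cast ht
  have hTpos : (0:ℝ) < t := by linarith
  have hbT : b * (t:ℝ) < 1 := by
    have := (lt_div_iff₀ hTpos).1 hb; linarith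
  have hcT : c * (t:ℝ) < 1 := by
    have := (lt_div_iff₀ hTpos).1 hc; linarith
  set B : ℝ := 1 - ((t:ℝ) - 1) * b with hB
  set C : ℝ := 1 - ((t:ℝ) - 1) * c with hC
  have hBpos : 0 < B := by rw [hB]; nlinarith
  have hCpos : 0 < C := by rw [hC]; nlinarith
  set δ : ℝ := max a (max (b / B) (c / C)) with hδ
  set L : ℝ := max (b * t / B) (c * t / C) with hL
  have hδ0 : 0 ≤ δ := le_trans ha0 (le_max_left _ _)
  have hδ1 : δ < 1 := by
    apply max_lt ha1
    apply max_lt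
    · rw [div_lt_one hBpos]; nlinarith
    · rw [div_lt_one hCpos]; nlinarith
  have hL0 : 0 ≤ L := le_trans (by positivity) (le_max_left _ _)
  have hδb : b / B ≤ δ := le_trans (le_max_left _ _) (le_max_right _ _)
  have hδc : c / C ≤ δ := le_trans (le_max_right _ _) (le_max_right _ _)
  have hδa : a ≤ δ := le_max_left _ _
  have hLb : b * t / B ≤ L := le_max_left _ _
  have hLc : c * t / C ≤ L := le_max_right _ _
  refine ⟨δ, L, hδ0, hδ1, hL0, ?_, ?_⟩
  · intro x y
    have hd1 : 0 ≤ A (avec t x y) := hA.1 _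
    have hd2 : 0 ≤ A (avec t x (f x)) := hA.1 _
    have hD0 : 0 ≤ A (avec t (f x) (f y)) := hA.1 _
    rcases hZ x y with h | h | h
    · have h1 : a * A (avec t x y) ≤ δ * A (avec t x y) :=
        mul_le_mul_of_nonneg_right hδa hd1
      nlinarith [mul_nonneg hL0 hd2]
    · rw [d_symm ht hA (f x) x] at h
      have s2 : A (avec t (f y) y) ≤ ((t:ℝ)-1) * A (avec t (f y) (f x)) + A (avec t (f x) y) :=
        d_tri ht hA _ _ _
      rw [d_symm ht hA (f y) (f x)] at s2
      have s4 : A (avec t (f x) y) ≤ ((t:ℝ)-1) * A (avec t (f x) x) + A (avec t x y) :=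
        d_tri ht hA _ _ _
      rw [d_symm ht hA (f x) x] at s4
      have hp := mul_le_mul_of_nonneg_left s2 hb0
      have hq := mul_le_mul_of_nonneg_left s4 hb0
      have step : A (avec t (f x) (f y)) * B ≤ b * A (avec t x y) + b * t * A (avec t x (f x)) := by
        rw [hB]; linarith [hp, hq, h]
      calc A (avec t (f x) (f y)) ≤ (b * A (avec t x y) + b * t * A (avec t x (f x))) / B := by
            rw [le_div_iff₀ hBpos]; linarith
        _ = (b / B) * A (avec t x y) + (b * t / B) * A (avec t x (f x)) := by ring
        _ ≤ δ * A (avec t x y) + L * A (avec t x (f x)) :=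
            add_le_add (mul_le_mul_of_nonneg_right hδb hd1)
              (mul_le_mul_of_nonneg_right hLb hd2)
    · have s2 : A (avec t (f x) y) ≤ ((t:ℝ)-1) * A (avec t (f x) x) + A (avec t x y) :=
        d_tri ht hA _ _ _
      rw [d_symm ht hA (f x) x] at s2
      have s4 : A (avec t (f y) x) ≤ ((t:ℝ)-1) * A (avec t (f y) (f x)) + A (avec t (f x) x) :=
        d_tri ht hA _ _ _
      rw [d_symm ht hA (f y) (f x), d_symm ht hA (f x) x] at s4
      have hp := mul_le_mul_of_nonneg_left s2 hc0
      have hq := mul_le_mul_of_nonneg_left s4 hc0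
      have step : A (avec t (f x) (f y)) * C ≤ c * A (avec t x y) + c * t * A (avec t x (f x)) := by
        rw [hC]; linarith [hp, hq, h]
      calc A (avec t (f x) (f y)) ≤ (c * A (avec t x y) + c * t * A (avec t x (f x))) / C := by
            rw [le_div_iff₀ hCpos]; linarith
        _ = (c / C) * A (avec t x y) + (c * t / C) * A (avec t x (f x)) := by ring
        _ ≤ δ * A (avec t x y) + L * A (avec t x (f x)) :=
            add_le_add (mul_le_mul_of_nonneg_right hδc hd1)
              (mul_le_mul_of_nonneg_right hLc hd2)
  · intro p
    have he0 : 0 ≤ A (avec t p (f p)) := hA.1 _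
    have hD0 : 0 ≤ A (avec t (f p) (f (f p))) := hA.1 _
    rcases hZ p (f p) with h | h | h
    · calc A (avec t (f p) (f (f p))) ≤ a * A (avec t p (f p)) := h
        _ ≤ δ * A (avec t p (f p)) := mul_le_mul_of_nonneg_right hδa he0
    · rw [d_symm ht hA (f p) p, d_symm ht hA (f (f p)) (f p)] at h
      have step : A (avec t (f p) (f (f p))) * B ≤ b * A (avec t p (f p)) := by
        rw [hB]
        have hx : 0 ≤ ((t:ℝ) - 2) * b * A (avec t (f p) (f (f p))) :=
          mul_nonneg (mul_nonneg (by linarith) hb0) hD0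
        nlinarith [h, hx]
      calc A (avec t (f p) (f (f p))) ≤ (b * A (avec t p (f p))) / B := by
            rw [le_div_iff₀ hBpos]; linarith
        _ = (b / B) * A (avec t p (f p)) := by ring
        _ ≤ δ * A (avec t p (f p)) := mul_le_mul_of_nonneg_right hδb he0
    · rw [A_avec_self hA (f p)] at h
      have s4 : A (avec t (f (f p)) p) ≤ ((t:ℝ)-1) * A (avec t (f (f p)) (f p)) + A (avec t (f p) p) :=
        d_tri ht hA _ _ _
      rw [d_symm ht hA (f (f p)) (f p), d_symm ht hA (f p) p] at s4
      have hq := mul_le_mul_of_nonneg_left s4 hc0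
      have step : A (avec t (f p) (f (f p))) * C ≤ c * A (avec t p (f p)) := by
        rw [hC]; linarith [hq, h]
      calc A (avec t (f p) (f (f p))) ≤ (c * A (avec t p (f p))) / C := by
            rw [le_div_iff₀ hCpos]; linarith
        _ = (c / C) * A (avec t p (f p)) := by ring
        _ ≤ δ * A (avec t p (f p)) := mul_le_mul_of_nonneg_right hδc he0


theorem exists_fixed {t : ℕ} (ht : 2 ≤ t) {A : (Fin t → X) → ℝ} (hA : IsAMetric t A)
    (hcomp : IsCompleteA t A) {f : X → X} {δ L : ℝ}
    (hδ0 : 0 ≤ δ) (hδ1 : δ < 1) (hL0 : 0 ≤ L)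
    (hkey : ∀ x y, A (avec t (f x) (f y)) ≤
        δ * A (avec t x y) + L * A (avec t x (f x)))
    (hcon : ∀ p, A (avec t (f p) (f (f p))) ≤ δ * A (avec t p (f p)))
    (z : X) : ∃ u, f u = u := by
  have hT2 : (2 : ℝ) ≤ (t : ℝ) := by exact_mod_cast ht
  set y : ℕ → X := fun n => f^[n] z with hy
  have hys : ∀ n, y (n + 1) = f (y n) := fun n => Function.iterate_succ_apply' f n z
  set e : ℕ → ℝ := fun n => A (avec t (y n) (y (n + 1))) with he
  have he0 : ∀ n, 0 ≤ e n := fun n => hA.1 _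
  have hestep : ∀ n, e (n + 1) ≤ δ * e n := by
    intro n
    have h := hcon (y n)
    rw [← hys n] at h
    rw [← hys (n + 1)] at h
    exact h
  have hepow : ∀ n, e n ≤ δ ^ n * e 0 := by
    intro n
    induction n with
    | zero => simp
    | succ n ih =>
      calc e (n + 1) ≤ δ * e n := hestep n
        _ ≤ δ * (δ ^ n * e 0) := mul_le_mul_of_nonneg_left ih hδ0
        _ = δ ^ (n + 1) * e 0 := by ring
  have hgap : ∀ n k, A (avec t (y n) (y (n + k))) ≤
      ((t : ℝ) - 1) * ∑ j ∈ Finset.range k, e (n + j) := by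
    intro n k
    induction k generalizing n with
    | zero => simp [A_avec_self hA]
    | succ k ih =>
      have h1 : A (avec t (y n) (y (n + (k + 1)))) ≤
          ((t : ℝ) - 1) * e n + A (avec t (y (n + 1)) (y (n + (k + 1)))) :=
        d_tri ht hA _ _ _
      have h2 := ih (n + 1)
      rw [show (n + 1) + k = n + (k + 1) by omega] at h2
      have hsum : ∑ j ∈ Finset.range (k + 1), e (n + j) =
          e n + ∑ j ∈ Finset.range k, e ((n + 1) + j) := by
        rw [Finset.sum_range_succ']
        simp only [Nat.add_zero]
        rw [add_comm]
        congr 1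
        exact Finset.sum_congr rfl fun j _ => by rw [show n + (j + 1) = (n + 1) + j by omega]
      rw [hsum]
      have hsnn : 0 ≤ ∑ j ∈ Finset.range k, e ((n+1) + j) :=
        Finset.sum_nonneg fun j _ => he0 _
      nlinarith [h1, h2]
  -- geometric bound
  set Cg : ℝ := ((t : ℝ) - 1) * (e 0 / (1 - δ)) with hCg
  have hCg0 : 0 ≤ Cg := by
    apply mul_nonneg (by linarith)
    exact div_nonneg (he0 0) (by linarith)
  have hbound : ∀ n m, n ≤ m → A (avec t (y n) (y m)) ≤ Cg * δ ^ n := by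
    intro n m hnm
    obtain ⟨k, rfl⟩ := Nat.exists_eq_add_of_le hnm
    have h1 := hgap n k
    have h2 : ∑ j ∈ Finset.range k, e (n + j) ≤ (1 / (1 - δ)) * (δ ^ n * e 0) := by
      have hterm : ∀ j ∈ Finset.range k, e (n + j) ≤ δ ^ j * (δ ^ n * e 0) := by
        intro j _
        calc e (n + j) ≤ δ ^ (n + j) * e 0 := hepow _
          _ = δ ^ j * (δ ^ n * e 0) := by rw [pow_add]; ring
      calc ∑ j ∈ Finset.range k, e (n + j) ≤
            ∑ j ∈ Finset.range k, δ ^ j * (δ ^ n * e 0) := Finset.sum_le_sum hterm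
        _ = (∑ j ∈ Finset.range k, δ ^ j) * (δ ^ n * e 0) := by rw [Finset.sum_mul]
        _ ≤ (1 / (1 - δ)) * (δ ^ n * e 0) := by
            apply mul_le_mul_of_nonneg_right _ (mul_nonneg (pow_nonneg hδ0 n) (he0 0))
            rw [le_div_iff₀ (by linarith)]
            have := geom_sum_mul δ k
            nlinarith [pow_nonneg hδ0 k]
      
    calc A (avec t (y n) (y (n + k))) ≤ ((t : ℝ) - 1) * ∑ j ∈ Finset.range k, e (n + j) := h1
      _ ≤ ((t : ℝ) - 1) * ((1 / (1 - δ)) * (δ ^ n * e 0)) :=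
          mul_le_mul_of_nonneg_left h2 (by linarith)
      _ = Cg * δ ^ n := by rw [hCg]; ring
  have hCauchy : ∀ ε : ℝ, 0 < ε → ∃ N, ∀ n ≥ N, ∀ m ≥ N, A (avec t (y n) (y m)) < ε := by
    intro ε hε
    have htend : Tendsto (fun n => Cg * δ ^ n) atTop (nhds 0) := by
      simpa using (tendsto_pow_atTop_nhds_zero_of_lt_one hδ0 hδ1).const_mul Cg
    obtain ⟨N, hN⟩ := (htend.eventually_lt_const hε).exists
    refine ⟨N, fun n hn m hm => ?_⟩
    rcases le_total n m with hle | hle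
    · calc A (avec t (y n) (y m)) ≤ Cg * δ ^ n := hbound n m hle
        _ ≤ Cg * δ ^ N := mul_le_mul_of_nonneg_left
            (pow_le_pow_of_le_one hδ0 hδ1.le hn) hCg0
        _ < ε := hN
    · rw [d_symm ht hA]
      calc A (avec t (y m) (y n)) ≤ Cg * δ ^ m := hbound m n hle
        _ ≤ Cg * δ ^ N := mul_le_mul_of_nonneg_left
            (pow_le_pow_of_le_one hδ0 hδ1.le hm) hCg0
        _ < ε := hN
  obtain ⟨u, hu⟩ := hcomp y hCauchy
  have htende : Tendsto e atTop (nhds 0) := by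
    apply squeeze_zero he0 hepow
    simpa using (tendsto_pow_atTop_nhds_zero_of_lt_one hδ0 hδ1).mul_const (e 0)
  have hg : Tendsto (fun n => δ * A (avec t (y n) u) + L * e n) atTop (nhds 0) := by
    simpa using (hu.const_mul δ).add (htende.const_mul L)
  have h1 : ∀ n, A (avec t (y (n + 1)) (f u)) ≤ δ * A (avec t (y n) u) + L * e n := by
    intro n
    rw [hys n]
    exact hkey (y n) u |>.trans (by rw [← hys n])
  have hG : Tendsto (fun n => ((t:ℝ) - 1) * (δ * A (avec t (y n) u) + L * e n)
      + A (avec t (y (n + 1)) u)) atTop (nhds 0) := by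
    have hshift : Tendsto (fun n => A (avec t (y (n + 1)) u)) atTop (nhds 0) :=
      hu.comp (tendsto_add_atTop_nat 1)
    simpa using (hg.const_mul ((t:ℝ) - 1)).add hshift
  have hfu : A (avec t (f u) u) ≤ 0 := by
    apply ge_of_tendsto' hG
    intro n
    calc A (avec t (f u) u) ≤
        ((t:ℝ) - 1) * A (avec t (f u) (y (n + 1))) + A (avec t (y (n + 1)) u) :=
          d_tri ht hA _ _ _
      _ ≤ ((t:ℝ) - 1) * (δ * A (avec t (y n) u) + L * e n) + A (avec t (y (n + 1)) u) := by
          have := h1 n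
          rw [d_symm ht hA (f u) (y (n+1))]
          nlinarith [this]
  exact ⟨u, (d_eq_zero_iff ht hA _ _).1 (le_antisymm hfu (hA.1 _))⟩


end MannAux

open MannAux in
/-- Convergence of the Mann iteration process to the unique fixed point of an
A-Zamfirescu mapping in a complete convex A-metric space. -/
theorem mann_converges_to_unique_fixed_point
    {X : Type*} (t : ℕ) (ht : 2 ≤ t)
    (A : (Fin t → X) → ℝ) (hA : IsAMetric t A)
    (W : (Fin t → X) → (Fin t → ℝ) → X) (hW : IsConvexStructure t A W)
    (hcomp : IsCompleteA t A)
    (f : X → X) (hf : IsAZ t A f)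
    (α : ℕ → Fin t → ℝ)
    (hα : ∀ n i, α n i ∈ Set.Icc (0 : ℝ) 1)
    (hαsum : ∀ n, ∑ i, α n i = 1)
    (hdiv : Tendsto (fun N => ∑ n ∈ Finset.range N, α n ⟨t - 1, by omega⟩) atTop atTop)
    (x₀ : X) (x : ℕ → X) (hx₀ : x 0 = x₀)
    (hrec : ∀ n, x (n + 1) = W (avec t (x n) (f (x n))) (α n)) :
    ∃ u : X, f u = u ∧ (∀ v : X, f v = v → v = u) ∧
      Tendsto (fun n => A (avec t (x n) u)) atTop (nhds 0) := by
  obtain ⟨δ, L, hδ0, hδ1, hL0, hkey, hcon⟩ := AZ_key ht hA hf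
  obtain ⟨u, hu⟩ := exists_fixed ht hA hcomp hδ0 hδ1 hL0 hkey hcon x₀
  have huniq : ∀ v, f v = v → v = u := by
    intro v hv
    have h := hkey v u
    rw [hv, hu] at h
    have h3 := A_avec_self hA v
    have h0 := hA.1 (avec t v u)
    exact (d_eq_zero_iff ht hA v u).1 (by nlinarith)
  refine ⟨u, hu, huniq, ?_⟩
  obtain ⟨m, rfl⟩ : ∃ m, t = m + 1 := ⟨t - 1, by omega⟩
  set β : ℕ → ℝ := fun n => α n (Fin.last m) with hβ
  have hβmem : ∀ n, 0 ≤ β n ∧ β n ≤ 1 := fun n => ⟨(hα n _).1, (hα n _).2⟩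
  have hγ0 : ∀ n, 0 ≤ 1 - (1 - δ) * β n := by
    intro n; nlinarith [(hβmem n).1, (hβmem n).2]
  have hufx : ∀ w : X, A (avec (m + 1) u (f w)) ≤ δ * A (avec (m + 1) u w) := by
    intro w
    have h := hkey u w
    rw [hu, A_avec_self hA u] at h
    linarith
  have hstep : ∀ n, A (avec (m + 1) u (x (n + 1))) ≤
      (1 - (1 - δ) * β n) * A (avec (m + 1) u (x n)) := by
    intro n
    have hw := hW (fun _ => u) (avec (m + 1) (x n) (f (x n))) (α n) (hα n) (hαsum n)
    have hw' : A (avec (m + 1) u (x (n + 1))) ≤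
        ∑ i, α n i * A (avec (m + 1) u (avec (m + 1) (x n) (f (x n)) i)) := by
      rw [hrec n]; exact hw
    rw [Fin.sum_univ_castSucc] at hw'
    simp only [avec_castSucc, avec_last] at hw'
    rw [← Finset.sum_mul] at hw'
    have hsum : ∑ i : Fin m, α n i.castSucc = 1 - β n := by
      have h1 := hαsum n
      rw [Fin.sum_univ_castSucc] at h1
      simp only [hβ]
      linarith
    rw [hsum] at hw'
    have h2 := hufx (x n)
    have hβ0 := (hβmem n).1
    nlinarith [hw', mul_le_mul_of_nonneg_left h2 hβ0]
  set s : ℕ → ℝ := fun n => A (avec (m + 1) u (x n)) with hs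
  have hs0 : ∀ n, 0 ≤ s n := fun n => hA.1 _
  have hprod : ∀ n, s n ≤ s 0 * ∏ k ∈ Finset.range n, (1 - (1 - δ) * β k) := by
    intro n
    induction n with
    | zero => simp
    | succ n ih =>
      calc s (n + 1) ≤ (1 - (1 - δ) * β n) * s n := hstep n
        _ ≤ (1 - (1 - δ) * β n) * (s 0 * ∏ k ∈ Finset.range n, (1 - (1 - δ) * β k)) :=
            mul_le_mul_of_nonneg_left ih (hγ0 n)
        _ = s 0 * ∏ k ∈ Finset.range (n + 1), (1 - (1 - δ) * β k) := by
            rw [Finset.prod_range_succ]; ring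
  have hprodexp : ∀ n, ∏ k ∈ Finset.range n, (1 - (1 - δ) * β k) ≤
      Real.exp (-((1 - δ) * ∑ k ∈ Finset.range n, β k)) := by
    intro n
    calc ∏ k ∈ Finset.range n, (1 - (1 - δ) * β k)
        ≤ ∏ k ∈ Finset.range n, Real.exp (-((1 - δ) * β k)) := by
          apply Finset.prod_le_prod (fun k _ => hγ0 k)
          intro k _
          have := Real.add_one_le_exp (-((1 - δ) * β k))
          linarith
      _ = Real.exp (∑ k ∈ Finset.range n, -((1 - δ) * β k)) := by rw [Real.exp_sum]
      _ = Real.exp (-((1 - δ) * ∑ k ∈ Finset.range n, β k)) := by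
          congr 1
          rw [Finset.mul_sum, ← Finset.sum_neg_distrib]
  have hdiv' : Tendsto (fun N => ∑ n ∈ Finset.range N, β n) atTop atTop := hdiv
  have h1 : Tendsto (fun n => (1 - δ) * ∑ k ∈ Finset.range n, β k) atTop atTop :=
    hdiv'.const_mul_atTop (by linarith)
  have h2 : Tendsto (fun n => -((1 - δ) * ∑ k ∈ Finset.range n, β k)) atTop atBot :=
    tendsto_neg_atTop_atBot.comp h1
  have h3 : Tendsto (fun n => Real.exp (-((1 - δ) * ∑ k ∈ Finset.range n, β k)))
      atTop (nhds 0) := Real.tendsto_exp_atBot.comp h2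
  have hfinal : Tendsto s atTop (nhds 0) := by
    apply squeeze_zero hs0
      (fun n => le_trans (hprod n)
        (mul_le_mul_of_nonneg_left (hprodexp n) (hs0 0)))
    simpa using h3.const_mul (s 0)
  have heq : (fun n => A (avec (m + 1) (x n) u)) = s :=
    funext fun n => d_symm ht hA (x n) u
  rw [heq]
  exact hfinal
end

section
/- Let t ≥ 2, let (X, A) be an A-metric space, and let f : X → X be an A-Zamfirescu mapping. Then there exists δ with 0 ≤ δ < 1 such that for all x, y ∈ X: A(fx, fx, ..., fx, fy) ≤ δ·A(x, x, ..., x, y) + t·δ·A(fx, fx, ..., fx, x) and A(fx, fx, ..., fx, fy) ≤ δ·A(x, x, ..., x, y) + t·δ·A(fy, fy, ..., fy, x). -/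
set_option maxHeartbeats 1000000

open Filter

private lemma az_sum_range_ite (t : ℕ) (ht : 1 ≤ t) (p q : ℝ) :
    ∑ i ∈ Finset.range t, (if i < t - 1 then p else q) = (t - 1 : ℕ) * p + q := by
  obtain ⟨k, rfl⟩ : ∃ k, t = k + 1 := ⟨t - 1, by omega⟩
  simp only [Nat.add_sub_cancel]
  rw [Finset.sum_range_succ, if_neg (lt_irrefl k),
    Finset.sum_congr rfl (fun i hi => if_pos (Finset.mem_range.mp hi))]
  simp [mul_comm]

private lemma az_key_div (T D dxy dw β δ : ℝ) (hβ0 : 0 ≤ β)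
    (he : 0 < 1 - β * (T - 1)) (hβδ : β / (1 - β * (T - 1)) ≤ δ) (hδ0 : 0 ≤ δ)
    (hdxy : 0 ≤ dxy) (hdw : 0 ≤ dw) (hT0 : 0 ≤ T)
    (hmain : (1 - β * (T - 1)) * D ≤ β * dxy + β * T * dw) :
    D ≤ δ * dxy + T * δ * dw := by
  have hβe : β ≤ δ * (1 - β * (T - 1)) := by
    rw [div_le_iff₀ he] at hβδ; linarith
  have h1 : β * dxy ≤ δ * (1 - β * (T - 1)) * dxy :=
    mul_le_mul_of_nonneg_right hβe hdxy
  have h2 : β * (T * dw) ≤ δ * (1 - β * (T - 1)) * (T * dw) :=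
    mul_le_mul_of_nonneg_right hβe (mul_nonneg hT0 hdw)
  have h3 : (1 - β * (T - 1)) * D ≤ (1 - β * (T - 1)) * (δ * dxy + T * δ * dw) := by
    nlinarith [h1, h2, hmain]
  exact le_of_mul_le_mul_left h3 he

/-- For an A-Zamfirescu mapping there exists `0 ≤ δ < 1` satisfying the two
key contraction-type inequalities. -/
theorem az_contraction_lemma
    {X : Type*} (t : ℕ) (ht : 2 ≤ t)
    (A : (Fin t → X) → ℝ) (hA : IsAMetric t A)
    (f : X → X) (hf : IsAZ t A f) :
    ∃ δ : ℝ, 0 ≤ δ ∧ δ < 1 ∧ ∀ x y : X,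
      A (avec t (f x) (f y)) ≤
        δ * A (avec t x y) + (t : ℝ) * δ * A (avec t (f x) x) ∧
      A (avec t (f x) (f y)) ≤
        δ * A (avec t x y) + (t : ℝ) * δ * A (avec t (f y) x) := by
  obtain ⟨a, b, c, ha0, ha1, hb0, hb1, hc0, hc1, hAZ⟩ := hf
  set T : ℝ := (t : ℝ) with hT
  have hT2 : (2 : ℝ) ≤ T := by rw [hT]; exact_mod_cast ht
  have hT0 : (0 : ℝ) < T := by linarith
  have hbt : b * T < 1 := by
    have := (lt_div_iff₀ hT0).mp hb1; linarith
  have hct : c * T < 1 := by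
    have := (lt_div_iff₀ hT0).mp hc1; linarith
  -- the "distance"
  set d : X → X → ℝ := fun u v => A (avec t u v) with hd
  have dnn : ∀ u v, 0 ≤ d u v := fun u v => hA.1 _
  have dself : ∀ u, d u u = 0 := by
    intro u
    exact (hA.2.1 _).mpr (fun i j => by simp only [avec]; split <;> split <;> rfl)
  have tri : ∀ u v z : X, d u v ≤ (T - 1) * d u z + d v z := by
    intro u v z
    have h := hA.2.2 (avec t u v) z
    have hsum : ∑ i, A (avec t ((avec t u v) i) z) = ((t - 1 : ℕ) : ℝ) * d u z + d v z := by
      calc ∑ i, A (avec t ((avec t u v) i) z)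
          = ∑ i : Fin t, (if (i : ℕ) < t - 1 then d u z else d v z) := by
            apply Finset.sum_congr rfl
            intro i _
            by_cases hi : (i : ℕ) < t - 1 <;> simp [avec, hi, hd]
        _ = ∑ i ∈ Finset.range t, (if i < t - 1 then d u z else d v z) :=
            Fin.sum_univ_eq_sum_range (fun n => if n < t - 1 then d u z else d v z) t
        _ = ((t - 1 : ℕ) : ℝ) * d u z + d v z := az_sum_range_ite t (by omega) _ _
    have hcast : ((t - 1 : ℕ) : ℝ) = T - 1 := by
      rw [Nat.cast_sub (by omega : 1 ≤ t)]; simp [hT]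
    rw [hsum, hcast] at h
    exact h
  have dsymm : ∀ u v, d u v = d v u := by
    intro u v
    have h1 := tri u v u
    have h2 := tri v u v
    rw [dself u] at h1
    rw [dself v] at h2
    linarith
  -- δ
  have heb : 0 < 1 - b * (T - 1) := by nlinarith
  have hec : 0 < 1 - c * (T - 1) := by nlinarith
  set δb : ℝ := b / (1 - b * (T - 1)) with hδb
  set δc : ℝ := c / (1 - c * (T - 1)) with hδc
  have hδb0 : 0 ≤ δb := div_nonneg hb0 heb.le
  have hδc0 : 0 ≤ δc := div_nonneg hc0 hec.le
  have hδb1 : δb < 1 := by rw [hδb, div_lt_one heb]; nlinarith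
  have hδc1 : δc < 1 := by rw [hδc, div_lt_one hec]; nlinarith
  refine ⟨max a (max δb δc), le_trans ha0 (le_max_left _ _),
    max_lt ha1 (max_lt hδb1 hδc1), ?_⟩
  set δ : ℝ := max a (max δb δc) with hδ
  have hδ0 : 0 ≤ δ := le_trans ha0 (le_max_left _ _)
  have haδ : a ≤ δ := le_max_left _ _
  have hbδ : δb ≤ δ := le_trans (le_max_left _ _) (le_max_right _ _)
  have hcδ : δc ≤ δ := le_trans (le_max_right _ _) (le_max_right _ _)
  intro x y
  set D : ℝ := d (f x) (f y) with hD
  rcases hAZ x y with h | h | h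
  · -- AZ1
    have h1 : a * d x y ≤ δ * d x y := mul_le_mul_of_nonneg_right haδ (dnn x y)
    constructor
    · have := mul_nonneg (mul_nonneg hT0.le hδ0) (dnn (f x) x)
      calc A (avec t (f x) (f y)) ≤ a * A (avec t x y) := h
        _ ≤ δ * A (avec t x y) + T * δ * A (avec t (f x) x) := by
            simp only [← hd] at *; linarith
    · have := mul_nonneg (mul_nonneg hT0.le hδ0) (dnn (f y) x)
      calc A (avec t (f x) (f y)) ≤ a * A (avec t x y) := h
        _ ≤ δ * A (avec t x y) + T * δ * A (avec t (f y) x) := by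
            simp only [← hd] at *; linarith
  · -- AZ2
    have h' : D ≤ b * (d (f x) x + d (f y) y) := h
    constructor
    · -- first inequality
      have t1 : d (f y) y ≤ (T - 1) * D + d y (f x) := by
        have := tri (f y) y (f x)
        rw [show d (f y) (f x) = D by rw [hD, dsymm]] at this
        exact this
      have t2 : d y (f x) ≤ (T - 1) * d (f x) x + d x y := by
        have := tri (f x) y x
        rw [dsymm y (f x), dsymm y x] at *
        linarith [tri (f x) y x]
      have hmain : (1 - b * (T - 1)) * D ≤ b * d x y + b * T * d (f x) x := by
        nlinarith [mul_le_mul_of_nonneg_left t1 hb0, mul_le_mul_of_nonneg_left t2 hb0]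
      exact az_key_div T D (d x y) (d (f x) x) b δ hb0 heb hbδ hδ0 (dnn x y)
        (dnn (f x) x) hT0.le hmain
    · -- second inequality
      have t1 : d (f x) x ≤ (T - 1) * D + d (f y) x := by
        have h1 := tri (f x) x (f y)
        rw [dsymm x (f y)] at h1
        have h2 := tri (f y) x x  -- not needed
        linarith [h1]
      have t2 : d (f y) y ≤ (T - 1) * d (f y) x + d x y := by
        have := tri (f y) y x
        rw [dsymm y x] at this
        linarith
      have hmain : (1 - b * (T - 1)) * D ≤ b * d x y + b * T * d (f y) x := by
        nlinarith [mul_le_mul_of_nonneg_left t1 hb0, mul_le_mul_of_nonneg_left t2 hb0]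
      exact az_key_div T D (d x y) (d (f y) x) b δ hb0 heb hbδ hδ0 (dnn x y)
        (dnn (f y) x) hT0.le hmain
  · -- AZ3
    have h' : D ≤ c * (d (f x) y + d (f y) x) := h
    constructor
    · have t1 : d (f x) y ≤ (T - 1) * d (f x) x + d x y := by
        have := tri (f x) y x
        rw [dsymm y x] at this
        linarith
      have t2 : d (f y) x ≤ (T - 1) * D + d (f x) x := by
        have := tri (f y) x (f x)
        rw [show d (f y) (f x) = D by rw [hD, dsymm], dsymm x (f x)] at this
        exact this
      have hmain : (1 - c * (T - 1)) * D ≤ c * d x y + c * T * d (f x) x := by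
        nlinarith [mul_le_mul_of_nonneg_left t1 hc0, mul_le_mul_of_nonneg_left t2 hc0]
      exact az_key_div T D (d x y) (d (f x) x) c δ hc0 hec hcδ hδ0 (dnn x y)
        (dnn (f x) x) hT0.le hmain
    · have t1 : d (f x) y ≤ (T - 1) * D + d (f y) y := by
        have := tri (f x) y (f y)
        rw [dsymm y (f y)] at this
        exact this
      have t2 : d (f y) y ≤ (T - 1) * d (f y) x + d x y := by
        have := tri (f y) y x
        rw [dsymm y x] at this
        linarith
      have hmain : (1 - c * (T - 1)) * D ≤ c * d x y + c * T * d (f y) x := by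
        nlinarith [mul_le_mul_of_nonneg_left t1 hc0, mul_le_mul_of_nonneg_left t2 hc0]
      exact az_key_div T D (d x y) (d (f y) x) c δ hc0 hec hcδ hδ0 (dnn x y)
        (dnn (f y) x) hT0.le hmain
end

section
/- Let t ≥ 2 and let (X, A) be an A-metric space. If f : X → X is an A-Zamfirescu mapping, then f has at most one fixed point: if f u = u and f v = v, then u = v. -/
open Filter

/-- An A-Zamfirescu mapping has at most one fixed point. -/
theorem az_fixed_point_unique
    {X : Type*} (t : ℕ) (ht : 2 ≤ t)
    (A : (Fin t → X) → ℝ) (hA : IsAMetric t A)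
    (f : X → X) (hf : IsAZ t A f)
    (u v : X) (hu : f u = u) (hv : f v = v) :
    u = v := by
  obtain ⟨hpos, hzero, htri⟩ := hA
  obtain ⟨a, b, c, ha0, ha1, hb0, hb1, hc0, hc1, hAZ⟩ := hf
  have hself : ∀ x : X, A (avec t x x) = 0 := fun x =>
    (hzero _).2 (by intro i j; simp [avec])
  have hsym : ∀ x y : X, A (avec t x y) ≤ A (avec t y x) := by
    intro x y
    have h := htri (avec t x y) x
    have hsum : ∑ i, A (avec t (avec t x y i) x) = A (avec t y x) := by
      rw [Finset.sum_eq_single (⟨t - 1, by omega⟩ : Fin t)]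
      · have : ¬ ((t - 1 : ℕ) < t - 1) := by omega
        simp [avec, this]
      · intro i _ hi
        have hne : (i : ℕ) ≠ t - 1 := fun h' => hi (Fin.ext h')
        have hlt : (i : ℕ) < t - 1 := by have := i.isLt; omega
        simp [avec, hlt, hself]
      · simp
    rw [hsum] at h; exact h
  have key := hAZ u v
  rw [hu, hv] at key
  have hD0 : 0 ≤ A (avec t u v) := hpos _
  have hDz : A (avec t u v) = 0 := by
    rcases key with h | h | h
    · nlinarith
    · rw [hself, hself] at h; nlinarith
    · have h2 := hsym v u
      have htr : (1 : ℝ) / t ≤ 1 / 2 := by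
        apply one_div_le_one_div_of_le
        · norm_num
        · exact_mod_cast ht
      nlinarith
  have hall := (hzero _).1 hDz
  have h0 : avec t u v ⟨0, by omega⟩ = u := by
    have : (0 : ℕ) < t - 1 := by omega
    simp [avec, this]
  have h1 : avec t u v ⟨t - 1, by omega⟩ = v := by
    have : ¬ ((t - 1 : ℕ) < t - 1) := by omega
    simp [avec, this]
  calc u = avec t u v ⟨0, by omega⟩ := h0.symm
    _ = avec t u v ⟨t - 1, by omega⟩ := hall _ _
    _ = v := h1
end
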